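/- arXiv:1702.08141 — 2 statements merged into one kernel-verified Lean document; each statement's English description precedes it below -/
import Mathlib

section
/- Let S be an oriented hypersurface in a Riemannian manifold (M,g) that is strictly convex at a point x₀ (its second fundamental form with respect to g is positive definite at x₀), and let c > 0 be a smooth function with ∂c/∂ν < 0 at x₀, where ν is the unit g-normal pointing to the convex side. Then S is strictly convex at x₀ with respect to the conformal metric c^{-2}g. -/
open Matrix

/-- Christoffel symbols `Γᵢⱼᵏ = (1/2) gᵏˡ (∂ᵢ gⱼₗ + ∂ⱼ gᵢₗ − ∂ₗ gᵢⱼ)` of a metric `g`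
(with pointwise inverse `ginv`) in coordinates on `ℝⁿ`. -/
noncomputable def christoffel {n : ℕ} (g ginv : (Fin n → ℝ) → Matrix (Fin n) (Fin n) ℝ)
    (x : Fin n → ℝ) (i j k : Fin n) : ℝ :=
  (1 / 2) * ∑ l, ginv x k l *
    (fderiv ℝ (fun y => g y j l) x (Pi.single i 1)
      + fderiv ℝ (fun y => g y i l) x (Pi.single j 1)
      - fderiv ℝ (fun y => g y i j) x (Pi.single l 1))

/-- Second fundamental form of `{xⁿ = 0}` (convex side `xⁿ > 0`) in semigeodesic coordinates,
on tangent vectors `ξ` with `ξⁿ = 0`: `II(ξ,ξ) = −Γ_{αβ}ⁿ ξ^α ξ^β`. -/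
noncomputable def sff {m : ℕ} (g ginv : (Fin (m + 1) → ℝ) → Matrix (Fin (m + 1)) (Fin (m + 1)) ℝ)
    (x ξ : Fin (m + 1) → ℝ) : ℝ :=
  -∑ i, ∑ j, christoffel g ginv x i j (Fin.last m) * ξ i * ξ j

/-- If the hypersurface `S = {xⁿ = 0}` is strictly convex at `x₀` w.r.t. `g`
(in semigeodesic coordinates, convex side `xⁿ > 0`, unit normal `ν = ∂ₙ`), and `∂c/∂ν < 0`
at `x₀`, then `S` is strictly convex at `x₀` w.r.t. the conformal metric `c⁻²g`. -/
theorem strictly_convex_conformal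
    {m : ℕ} (g ginv : (Fin (m + 1) → ℝ) → Matrix (Fin (m + 1)) (Fin (m + 1)) ℝ)
    (hsemi : ∀ y i, g y i (Fin.last m) = (if i = Fin.last m then (1 : ℝ) else 0)
      ∧ g y (Fin.last m) i = (if i = Fin.last m then (1 : ℝ) else 0))
    (hsymm : ∀ y, (g y)ᵀ = g y)
    (hinv : ∀ y, g y * ginv y = 1 ∧ ginv y * g y = 1)
    (hg : ∀ i j, ContDiff ℝ (⊤ : ℕ∞) fun y => g y i j)
    (hgpos : ∀ y, (g y).PosDef)
    (c : (Fin (m + 1) → ℝ) → ℝ) (hc : ContDiff ℝ (⊤ : ℕ∞) c) (hcpos : ∀ y, 0 < c y)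
    (x₀ : Fin (m + 1) → ℝ) (hx₀ : x₀ (Fin.last m) = 0)
    (hconv : ∀ ξ : Fin (m + 1) → ℝ, ξ (Fin.last m) = 0 → ξ ≠ 0 → 0 < sff g ginv x₀ ξ)
    (hdc : fderiv ℝ c x₀ (Pi.single (Fin.last m) 1) < 0) :
    ∀ ξ : Fin (m + 1) → ℝ, ξ (Fin.last m) = 0 → ξ ≠ 0 →
      0 < sff (fun y => ((c y) ^ 2)⁻¹ • g y) (fun y => (c y) ^ 2 • ginv y) x₀ ξ := by
  intro ξ hξn hξ0
  set n : Fin (m + 1) := Fin.last m with hn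
  set d : ℝ := fderiv ℝ c x₀ (Pi.single n 1) with hd
  have hcx : c x₀ ≠ 0 := (hcpos x₀).ne'
  -- ginv has e_n as last row
  have hginvlast : ∀ y l, ginv y n l = if n = l then (1 : ℝ) else 0 := by
    intro y l
    have h := congrFun (congrFun (hinv y).1 n) l
    rw [Matrix.mul_apply] at h
    have hs : ∑ k, g y n k * ginv y k l = ginv y n l := by
      rw [Finset.sum_eq_single n]
      · rw [(hsemi y n).2]; simp
      · intro b _ hb; rw [(hsemi y b).2]; simp [hb]
      · simp
    rw [hs] at h
    rw [h, Matrix.one_apply]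
  -- derivative of c
  have hcd : HasFDerivAt c (fderiv ℝ c x₀) x₀ := (hc.differentiable (by simp) x₀).hasFDerivAt
  -- the key christoffel formula for tangential indices
  have key : ∀ i j, i ≠ n → j ≠ n →
      christoffel (fun y => ((c y) ^ 2)⁻¹ • g y) (fun y => (c y) ^ 2 • ginv y) x₀ i j n
      = christoffel g ginv x₀ i j n + (c x₀)⁻¹ * d * g x₀ i j := by
    intro i j hi hj
    -- constant-zero off-diagonal entries
    have hzero1 : ∀ k, k ≠ n → (fun y => ((c y) ^ 2)⁻¹ * g y k n) = fun _ => (0 : ℝ) := by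
      intro k hk; funext y; rw [(hsemi y k).1]; simp [hk]
    have hzero2 : ∀ k, k ≠ n → (fun y => g y k n) = fun _ => (0 : ℝ) := by
      intro k hk; funext y; rw [(hsemi y k).1]; simp [hk]
    -- derivative of the conformal factor (c²)⁻¹
    have hq : HasFDerivAt (fun y => ((c y) ^ 2)⁻¹)
        ((-(2 * c x₀ ^ 1) / (c x₀ ^ 2) ^ 2) • fderiv ℝ c x₀) x₀ := by
      have h1 : HasDerivAt (fun t : ℝ => (t ^ 2)⁻¹)
          (-(2 * c x₀ ^ 1) / (c x₀ ^ 2) ^ 2) (c x₀) :=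
        (hasDerivAt_pow 2 (c x₀)).inv (pow_ne_zero 2 hcx)
      exact h1.comp_hasFDerivAt x₀ hcd
    -- derivative of conformal metric entry i j
    have hgd : HasFDerivAt (fun y => g y i j) (fderiv ℝ (fun y => g y i j) x₀) x₀ :=
      ((hg i j).differentiable (by simp) x₀).hasFDerivAt
    have hB : fderiv ℝ (fun y => ((c y) ^ 2)⁻¹ * g y i j) x₀ (Pi.single n 1)
        = ((c x₀) ^ 2)⁻¹ * fderiv ℝ (fun y => g y i j) x₀ (Pi.single n 1)
          + (-(2 * c x₀) / (c x₀ ^ 2) ^ 2) * d * g x₀ i j := by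
      have := (show HasFDerivAt (fun y => ((c y) ^ 2)⁻¹ * g y i j) _ x₀ from hq.mul hgd).fderiv
      rw [this]
      simp only [ContinuousLinearMap.add_apply, ContinuousLinearMap.smul_apply, smul_eq_mul]
      ring
    -- now compute both christoffels
    rw [christoffel, christoffel]
    have collapse : ∀ F : Fin (m + 1) → ℝ,
        (∑ l, ((c x₀) ^ 2 • ginv x₀) n l * F l) = (c x₀) ^ 2 * F n := by
      intro F
      rw [Finset.sum_eq_single n]
      · rw [Matrix.smul_apply, hginvlast]; simp
      · intro b _ hb; rw [Matrix.smul_apply, hginvlast]; simp [Ne.symm hb]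
      · simp
    have collapse' : ∀ F : Fin (m + 1) → ℝ,
        (∑ l, ginv x₀ n l * F l) = F n := by
      intro F
      rw [Finset.sum_eq_single n]
      · rw [hginvlast]; simp
      · intro b _ hb; rw [hginvlast]; simp [Ne.symm hb]
      · simp
    rw [collapse, collapse']
    simp only [Matrix.smul_apply, smul_eq_mul]
    rw [hzero1 j hj, hzero1 i hi, hzero2 j hj, hzero2 i hi]
    simp only [fderiv_const_apply, Pi.zero_apply, ContinuousLinearMap.zero_apply]
    rw [hB]
    field_simp
    ring
  -- rewrite sff of the conformal metric
  have hterm : ∀ i j,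
      christoffel (fun y => ((c y) ^ 2)⁻¹ • g y) (fun y => (c y) ^ 2 • ginv y) x₀ i j n
        * ξ i * ξ j
      = christoffel g ginv x₀ i j n * ξ i * ξ j
        + (c x₀)⁻¹ * d * (g x₀ i j * ξ i * ξ j) := by
    intro i j
    by_cases hi : i = n
    · subst hi; rw [hξn]; ring
    by_cases hj : j = n
    · subst hj; rw [hξn]; ring
    rw [key i j hi hj]; ring
  have hsff : sff (fun y => ((c y) ^ 2)⁻¹ • g y) (fun y => (c y) ^ 2 • ginv y) x₀ ξ
      = sff g ginv x₀ ξ - (c x₀)⁻¹ * d * (∑ i, ∑ j, g x₀ i j * ξ i * ξ j) := by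
    rw [sff, sff]
    rw [show (∑ i, ∑ j, christoffel (fun y => ((c y) ^ 2)⁻¹ • g y)
        (fun y => (c y) ^ 2 • ginv y) x₀ i j n * ξ i * ξ j)
      = ∑ i, ∑ j, (christoffel g ginv x₀ i j n * ξ i * ξ j
          + (c x₀)⁻¹ * d * (g x₀ i j * ξ i * ξ j)) from
      Finset.sum_congr rfl fun i _ => Finset.sum_congr rfl fun j _ => hterm i j]
    simp only [Finset.sum_add_distrib, ← Finset.mul_sum]
    ring
  rw [hsff]
  have hQ : 0 < ∑ i, ∑ j, g x₀ i j * ξ i * ξ j := by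
    have := (hgpos x₀).dotProduct_mulVec_pos hξ0
    simp only [star_trivial] at this
    calc (0 : ℝ) < ξ ⬝ᵥ (g x₀ *ᵥ ξ) := this
      _ = ∑ i, ∑ j, g x₀ i j * ξ i * ξ j := by
        simp only [dotProduct, Matrix.mulVec, dotProduct, Finset.mul_sum]
        exact Finset.sum_congr rfl fun i _ => Finset.sum_congr rfl fun j _ => by ring
  have h1 := hconv ξ hξn hξ0
  have h2 : 0 < -((c x₀)⁻¹ * d) * (∑ i, ∑ j, g x₀ i j * ξ i * ξ j) := by
    apply mul_pos _ hQ
    have : (c x₀)⁻¹ * d < 0 := mul_neg_of_pos_of_neg (inv_pos.mpr (hcpos x₀)) hdc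
    linarith
  nlinarith
end

section
/- Let S be an oriented hypersurface in (M,g) whose second fundamental form with respect to g vanishes at x₀ (a flat point). Let c > 0 be smooth. Then S is strictly convex at x₀ with respect to the conformal metric c^{-2}g if and only if ∂c/∂ν < 0 at x₀, where ν is the unit g-normal pointing to the designated convex side. -/
open Matrix

/-- If the second fundamental form of `S = {xⁿ = 0}` w.r.t. `g` vanishes at
`x₀` (a flat point), then `S` is strictly convex at `x₀` w.r.t. the conformal metric `c⁻²g`
if and only if `∂c/∂ν < 0` at `x₀`, where `ν = ∂ₙ` points to the designated convex side
`xⁿ > 0`. -/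
theorem flat_point_conformal_convexity_iff
    {m : ℕ} (hm : 0 < m)
    (g ginv : (Fin (m + 1) → ℝ) → Matrix (Fin (m + 1)) (Fin (m + 1)) ℝ)
    (hsemi : ∀ y i, g y i (Fin.last m) = (if i = Fin.last m then (1 : ℝ) else 0)
      ∧ g y (Fin.last m) i = (if i = Fin.last m then (1 : ℝ) else 0))
    (hsymm : ∀ y, (g y)ᵀ = g y)
    (hinv : ∀ y, g y * ginv y = 1 ∧ ginv y * g y = 1)
    (hg : ∀ i j, ContDiff ℝ (⊤ : ℕ∞) fun y => g y i j)
    (hgpos : ∀ y, (g y).PosDef)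
    (c : (Fin (m + 1) → ℝ) → ℝ) (hc : ContDiff ℝ (⊤ : ℕ∞) c) (hcpos : ∀ y, 0 < c y)
    (x₀ : Fin (m + 1) → ℝ) (hx₀ : x₀ (Fin.last m) = 0)
    (hflat : ∀ ξ : Fin (m + 1) → ℝ, ξ (Fin.last m) = 0 → sff g ginv x₀ ξ = 0) :
    (∀ ξ : Fin (m + 1) → ℝ, ξ (Fin.last m) = 0 → ξ ≠ 0 →
        0 < sff (fun y => ((c y) ^ 2)⁻¹ • g y) (fun y => (c y) ^ 2 • ginv y) x₀ ξ)
      ↔ fderiv ℝ c x₀ (Pi.single (Fin.last m) 1) < 0 := by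
  have hC : 0 < c x₀ := hcpos x₀
  have hC2 : c x₀ ^ 2 ≠ 0 := by positivity
  -- derivative of (c·)⁻²
  set E : (Fin (m + 1) → ℝ) →L[ℝ] ℝ :=
    (ContinuousLinearMap.smulRight (1 : ℝ →L[ℝ] ℝ) (-((c x₀ ^ 2) ^ 2)⁻¹)).comp
      (c x₀ • fderiv ℝ c x₀ + c x₀ • fderiv ℝ c x₀) with hEdef
  have hE : HasFDerivAt (fun y => (c y ^ 2)⁻¹) E x₀ := by
    have hcd : HasFDerivAt c (fderiv ℝ c x₀) x₀ := (hc.differentiable (by simp) x₀).hasFDerivAt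
    have hsq : HasFDerivAt (fun y => c y ^ 2)
        (c x₀ • fderiv ℝ c x₀ + c x₀ • fderiv ℝ c x₀) x₀ := by
      simp only [pow_two]; exact hcd.mul hcd
    exact (hasFDerivAt_inv hC2).comp x₀ hsq
  have hEapp : ∀ v, E v = (c x₀ * fderiv ℝ c x₀ v + c x₀ * fderiv ℝ c x₀ v)
      * (-((c x₀ ^ 2) ^ 2)⁻¹) := by
    intro v; simp [hEdef, smul_eq_mul]; ring
  -- entry derivatives of g
  have hDg : ∀ i j, HasFDerivAt (fun y => g y i j) (fderiv ℝ (fun y => g y i j) x₀) x₀ :=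
    fun i j => (((hg i j).differentiable (by simp)) x₀).hasFDerivAt
  have hconst : ∀ j, fderiv ℝ (fun y => g y j (Fin.last m)) x₀ = 0 := by
    intro j
    have h : (fun y => g y j (Fin.last m)) = fun _ => (if j = Fin.last m then (1 : ℝ) else 0) :=
      funext fun y => (hsemi y j).1
    rw [h]; exact fderiv_const_apply _
  -- derivatives of entries of the conformal metric
  have hconf : ∀ i j, fderiv ℝ (fun y => (c y ^ 2)⁻¹ * g y i j) x₀
      = (c x₀ ^ 2)⁻¹ • fderiv ℝ (fun y => g y i j) x₀ + g x₀ i j • E :=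
    fun i j => (hE.mul (hDg i j)).fderiv
  -- row (last m) of ginv at x₀
  have hrow : ∀ l, ginv x₀ (Fin.last m) l = if Fin.last m = l then (1 : ℝ) else 0 := by
    intro l
    have h1 := congrFun (congrFun (hinv x₀).1 (Fin.last m)) l
    have h2 : ∀ k, g x₀ (Fin.last m) k = if k = Fin.last m then (1 : ℝ) else 0 :=
      fun k => (hsemi x₀ k).2
    simp only [Matrix.mul_apply, Matrix.one_apply] at h1
    rw [← h1, Finset.sum_congr rfl (fun k _ => by rw [h2 k])]
    simp [eq_comm]
  -- christoffel of g
  have hΓg : ∀ i j, christoffel g ginv x₀ i j (Fin.last m)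
      = (1 / 2) * (-(fderiv ℝ (fun y => g y i j) x₀ (Pi.single (Fin.last m) 1))) := by
    intro i j
    unfold christoffel
    rw [Finset.sum_eq_single (Fin.last m)
      (fun l _ hl => by rw [hrow l, if_neg (fun h => hl h.symm), zero_mul])
      (fun h => absurd (Finset.mem_univ _) h)]
    rw [hrow (Fin.last m), if_pos rfl, hconst j, hconst i]
    simp
  -- christoffel of the conformal metric
  have hΓconf : ∀ i j,
      christoffel (fun y => ((c y) ^ 2)⁻¹ • g y) (fun y => (c y) ^ 2 • ginv y) x₀ i j
        (Fin.last m)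
      = (1 / 2) * (c x₀ ^ 2 *
          ((if j = Fin.last m then (1 : ℝ) else 0) * E (Pi.single i 1)
            + (if i = Fin.last m then (1 : ℝ) else 0) * E (Pi.single j 1)
            - ((c x₀ ^ 2)⁻¹ * fderiv ℝ (fun y => g y i j) x₀ (Pi.single (Fin.last m) 1)
                + g x₀ i j * E (Pi.single (Fin.last m) 1)))) := by
    intro i j
    unfold christoffel
    simp only [Matrix.smul_apply, smul_eq_mul]
    rw [Finset.sum_eq_single (Fin.last m)
      (fun l _ hl => by rw [hrow l, if_neg (fun h => hl h.symm), mul_zero, zero_mul])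
      (fun h => absurd (Finset.mem_univ _) h)]
    rw [hrow (Fin.last m), if_pos rfl, mul_one]
    rw [hconf j (Fin.last m), hconf i (Fin.last m), hconf i j]
    have hjn : g x₀ j (Fin.last m) = if j = Fin.last m then (1 : ℝ) else 0 := (hsemi x₀ j).1
    have hin : g x₀ i (Fin.last m) = if i = Fin.last m then (1 : ℝ) else 0 := (hsemi x₀ i).1
    simp only [ContinuousLinearMap.add_apply, ContinuousLinearMap.smul_apply, smul_eq_mul,
      hconst j, hconst i, ContinuousLinearMap.zero_apply, mul_zero, zero_add, hjn, hin]
  -- the quadratic form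
  have hQpos : ∀ ξ : Fin (m + 1) → ℝ, ξ ≠ 0 → 0 < ∑ i, ∑ j, g x₀ i j * ξ i * ξ j := by
    intro ξ hξ
    have := (hgpos x₀).dotProduct_mulVec_pos hξ
    simpa [dotProduct, Matrix.mulVec, Finset.mul_sum, mul_comm, mul_assoc, mul_left_comm]
      using this
  -- the key formula
  have hkey : ∀ ξ : Fin (m + 1) → ℝ, ξ (Fin.last m) = 0 →
      sff (fun y => ((c y) ^ 2)⁻¹ • g y) (fun y => (c y) ^ 2 • ginv y) x₀ ξ
        = (1 / 2) * c x₀ ^ 2 * E (Pi.single (Fin.last m) 1)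
            * (∑ i, ∑ j, g x₀ i j * ξ i * ξ j) := by
    intro ξ hξ
    have h0 : ∑ i, ∑ j, (1 / 2) * fderiv ℝ (fun y => g y i j) x₀ (Pi.single (Fin.last m) 1)
        * ξ i * ξ j = 0 := by
      have h := hflat ξ hξ
      unfold sff at h
      rw [neg_eq_zero] at h
      rw [Finset.sum_congr rfl fun i _ => Finset.sum_congr rfl fun j _ =>
        show (1 : ℝ) / 2 * fderiv ℝ (fun y => g y i j) x₀ (Pi.single (Fin.last m) 1) * ξ i * ξ j
          = -(christoffel g ginv x₀ i j (Fin.last m) * ξ i * ξ j) from by rw [hΓg i j]; ring]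
      simp only [Finset.sum_neg_distrib]
      rw [h, neg_zero]
    unfold sff
    have hterm : ∀ i j,
        christoffel (fun y => ((c y) ^ 2)⁻¹ • g y) (fun y => (c y) ^ 2 • ginv y) x₀ i j
            (Fin.last m) * ξ i * ξ j
        = -((1 / 2) * c x₀ ^ 2 * E (Pi.single (Fin.last m) 1) * (g x₀ i j * ξ i * ξ j))
          - (1 / 2) * fderiv ℝ (fun y => g y i j) x₀ (Pi.single (Fin.last m) 1)
              * ξ i * ξ j := by
      intro i j
      rw [hΓconf i j]
      have h1 : (if j = Fin.last m then (1 : ℝ) else 0) * ξ j = 0 := by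
        split
        · next hj => rw [hj, hξ, mul_zero]
        · rw [zero_mul]
      have h2 : (if i = Fin.last m then (1 : ℝ) else 0) * ξ i = 0 := by
        split
        · next hi => rw [hi, hξ, mul_zero]
        · rw [zero_mul]
      have h3 : c x₀ ^ 2 * (c x₀ ^ 2)⁻¹ = 1 := mul_inv_cancel₀ hC2
      linear_combination
        ((1 / 2) * c x₀ ^ 2 * E (Pi.single i 1) * ξ i) * h1
        + ((1 / 2) * c x₀ ^ 2 * E (Pi.single j 1) * ξ j) * h2
        - ((1 / 2) * fderiv ℝ (fun y => g y i j) x₀ (Pi.single (Fin.last m) 1) * ξ i * ξ j) * h3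
    rw [Finset.sum_congr rfl (fun i (_ : i ∈ Finset.univ) => Finset.sum_congr rfl
      (fun j (_ : j ∈ Finset.univ) => hterm i j))]
    simp only [Finset.sum_sub_distrib, Finset.sum_neg_distrib]
    rw [h0, sub_zero, neg_neg]
    simp only [← Finset.mul_sum]
  -- the normal derivative seen through E
  have hEn : E (Pi.single (Fin.last m) 1)
      = -(2 * c x₀ * ((c x₀ ^ 2) ^ 2)⁻¹) * fderiv ℝ c x₀ (Pi.single (Fin.last m) 1) := by
    rw [hEapp]; ring
  have hpos4 : (0 : ℝ) < ((c x₀ ^ 2) ^ 2)⁻¹ := by positivity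
  constructor
  · intro H
    have h0m : (⟨0, Nat.succ_pos m⟩ : Fin (m + 1)) ≠ Fin.last m := by
      intro h
      have := congrArg Fin.val h
      simp [Fin.last] at this
      omega
    set ξ0 : Fin (m + 1) → ℝ := Pi.single (⟨0, Nat.succ_pos m⟩ : Fin (m + 1)) 1 with hξ0def
    have hξn : ξ0 (Fin.last m) = 0 := Pi.single_eq_of_ne (Ne.symm h0m) 1
    have hξ0 : ξ0 ≠ 0 := by
      intro h
      have := congrFun h ⟨0, Nat.succ_pos m⟩
      simp [hξ0def] at this
    have hpos := H ξ0 hξn hξ0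
    rw [hkey ξ0 hξn, hEn] at hpos
    have hQ : 0 < ∑ i, ∑ j, g x₀ i j * ξ0 i * ξ0 j := hQpos ξ0 hξ0
    by_contra hcon
    push_neg at hcon
    have hk : 0 ≤ (c x₀ * ((c x₀ ^ 2) ^ 2)⁻¹ * (∑ i, ∑ j, g x₀ i j * ξ0 i * ξ0 j) * c x₀ ^ 2)
        * fderiv ℝ c x₀ (Pi.single (Fin.last m) 1) :=
      mul_nonneg (le_of_lt (mul_pos (mul_pos (mul_pos hC hpos4) hQ) (pow_pos hC 2))) hcon
    nlinarith [hpos, hk]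
  · intro hd ξ hξn hξ0
    rw [hkey ξ hξn, hEn]
    have hQ : 0 < ∑ i, ∑ j, g x₀ i j * ξ i * ξ j := hQpos ξ hξ0
    have hk : 0 < (c x₀ * ((c x₀ ^ 2) ^ 2)⁻¹ * (∑ i, ∑ j, g x₀ i j * ξ i * ξ j) * c x₀ ^ 2)
        * (-(fderiv ℝ c x₀ (Pi.single (Fin.last m) 1))) :=
      mul_pos (mul_pos (mul_pos (mul_pos hC hpos4) hQ) (pow_pos hC 2)) (neg_pos.mpr hd)
    nlinarith [hk]
end
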